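/- Let T be a tree obtained from the path P₄ = v₁v₂v₃v₄ by attaching a pendant edge uv₃, let H be a connected graph with vertex w, and let G₁ = T(v₄)∘H(w). Let G₂ be obtained from G₁ by deleting the edge uv₃ and adding the edge uv₁. Then ρ(G₂²) < ρ(G₁²). -/

import Mathlib

/-!
The squares `G₁²` and `G₂²` differ only in the edges at the pendant vertex `u`: in `G₂²` its
neighbours are `v₁, v₂`, in `G₁²` they include `v₂, v₃, v₄`. Hence for the positive Perron
vector `x` of `G₂²` the quadratic forms differ by at least `2 x_u (x_{v₃} + x_{v₄} - x_{v₁})`.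
The eigenvalue equations of `G₂²` at `v₁, v₃, v₄, u` give `(ρ² + ρ - 1)(x_{v₃} - x_{v₁}) ≥ 0`
with `ρ > 1`, so `x_{v₃} ≥ x_{v₁}`, and the Rayleigh quotient of `x` for `G₁²` exceeds
`ρ(G₂²)`.
-/

open SimpleGraph Finset Matrix
open scoped Classical

/-- Spectral radius of a finite simple graph: the supremum of eigenvalues of its
adjacency matrix. -/
noncomputable def specRad {V : Type*} [Fintype V] (G : SimpleGraph V) : ℝ :=
  sSup {μ : ℝ | ∃ x : V → ℝ, x ≠ 0 ∧
    (Matrix.of fun i j => if G.Adj i j then (1 : ℝ) else 0) *ᵥ x = μ • x}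

/-- The square of a graph: join vertices at distance 1 or 2. -/
def gsq {V : Type*} (G : SimpleGraph V) : SimpleGraph V :=
  SimpleGraph.fromRel (fun a b => G.dist a b = 1 ∨ G.dist a b = 2)

/-- Coalescence `H₁(v) ∘ H₂(w)`: identify the vertex `v` of `H₁` with the vertex `w`
of `H₂` (the identified vertex is `Sum.inl v`). -/
def coal {V₁ V₂ : Type*} (H₁ : SimpleGraph V₁) (v : V₁) (H₂ : SimpleGraph V₂) (w : V₂) :
    SimpleGraph (V₁ ⊕ {x : V₂ // x ≠ w}) :=
  SimpleGraph.fromRel (fun a b =>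
    match a, b with
    | Sum.inl a, Sum.inl b => H₁.Adj a b
    | Sum.inl a, Sum.inr b => a = v ∧ H₂.Adj w b.1
    | Sum.inr a, Sum.inr b => H₂.Adj a.1 b.1
    | Sum.inr _, Sum.inl _ => False)

/-- The star on `n` vertices with center `0`. -/
def starGraph (n : ℕ) : SimpleGraph (Fin n) :=
  SimpleGraph.fromRel (fun a _ => a.val = 0)

/-- The star on a vertex set `V` centered at `u`. -/
def starAt {V : Type*} (u : V) : SimpleGraph V :=
  SimpleGraph.fromRel (fun a _ => a = u)

/-- A unicyclic graph: connected with exactly as many edges as vertices. -/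
def IsUnicyclic {V : Type*} [Fintype V] (G : SimpleGraph V) : Prop :=
  G.Connected ∧ G.edgeSet.ncard = Fintype.card V

/-- Degree of a vertex. -/
noncomputable def deg {V : Type*} [Fintype V] (G : SimpleGraph V) (v : V) : ℕ :=
  (Finset.univ.filter fun u => G.Adj v u).card

/-- Average degree of a finite graph, as a real number. -/
noncomputable def avgDeg {V : Type*} [Fintype V] (G : SimpleGraph V) : ℝ :=
  (∑ v, (deg G v : ℝ)) / Fintype.card V

/-- Maximum degree of a finite graph. -/
noncomputable def maxDeg {V : Type*} [Fintype V] (G : SimpleGraph V) : ℕ :=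
  Finset.univ.sup fun v => deg G v

open Sum

namespace Matrix

variable {n : Type*} [Fintype n]

noncomputable def maxEigenvalue (A : Matrix n n ℝ) : ℝ :=
  sSup {μ : ℝ | ∃ x : n → ℝ, x ≠ 0 ∧ A *ᵥ x = μ • x}

theorem finite_setOf_eigenvalue (A : Matrix n n ℝ) :
    {μ : ℝ | ∃ x : n → ℝ, x ≠ 0 ∧ A *ᵥ x = μ • x}.Finite := by
  refine A.finite_spectrum.subset fun μ ⟨x, hx, hAx⟩ => ?_
  rw [← spectrum_toLin']
  exact Module.End.HasEigenvalue.mem_spectrum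
    (Module.End.hasEigenvalue_of_hasEigenvector ⟨Module.End.mem_eigenspace_iff.2 hAx, hx⟩)

theorem dotProduct_smul_one_sub_mulVec (A : Matrix n n ℝ) (c : ℝ) (x : n → ℝ) :
    x ⬝ᵥ ((c • (1 : Matrix n n ℝ) - A) *ᵥ x) = c * (x ⬝ᵥ x) - x ⬝ᵥ (A *ᵥ x) := by
  simp [sub_mulVec, smul_mulVec, dotProduct_sub, dotProduct_smul]

theorem dotProduct_mulVec_sub_dotProduct_mulVec {M N : Matrix n n ℝ} (hM : M.IsSymm)
    (hN : N.IsSymm) {u : n} (hMN : ∀ p q, p ≠ u → q ≠ u → M p q = N p q) (huu : M u u = N u u)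
    (x : n → ℝ) :
    x ⬝ᵥ (M *ᵥ x) - x ⬝ᵥ (N *ᵥ x) = 2 * x u * ((M *ᵥ x) u - (N *ᵥ x) u) := by
  set D := M - N
  have hD : D.IsSymm := hM.sub hN
  have hrow : ∀ p, p ≠ u → (D *ᵥ x) p = D u p * x u := by
    intro p hp
    rw [mulVec, dotProduct, Finset.sum_eq_single u (fun q _ hq => by simp [D, hMN p q hp hq])
      (by simp), hD.apply u p]
  have hsum : ∑ p ∈ Finset.univ.erase u, D u p * x p = (D *ᵥ x) u := by
    rw [Finset.sum_erase _ (by simp [D, huu]), mulVec, dotProduct]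
  rw [← dotProduct_sub, ← sub_mulVec, ← Pi.sub_apply (M *ᵥ x), ← sub_mulVec]
  calc x ⬝ᵥ (D *ᵥ x) = x u * (D *ᵥ x) u + ∑ p ∈ Finset.univ.erase u, x p * (D u p * x u) := by
        rw [dotProduct, ← Finset.add_sum_erase _ _ (Finset.mem_univ u)]
        exact congrArg _ (Finset.sum_congr rfl fun p hp => by
          rw [hrow p (Finset.ne_of_mem_erase hp)])
    _ = x u * (D *ᵥ x) u + x u * ∑ p ∈ Finset.univ.erase u, D u p * x p := by
        rw [Finset.mul_sum]
        exact congrArg _ (Finset.sum_congr rfl fun p _ => by ring)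
    _ = 2 * x u * (D *ᵥ x) u := by rw [hsum]; ring

namespace IsHermitian

variable {A : Matrix n n ℝ} (hA : A.IsHermitian)
include hA

theorem eigenvalues_mem_setOf_eigenvalue (i : n) :
    hA.eigenvalues i ∈ {μ : ℝ | ∃ x : n → ℝ, x ≠ 0 ∧ A *ᵥ x = μ • x} :=
  ⟨_, (WithLp.ofLp_eq_zero 2).ne.2 (hA.eigenvectorBasis.orthonormal.ne_zero i),
    hA.mulVec_eigenvectorBasis i⟩

theorem eigenvalues_le_maxEigenvalue (i : n) : hA.eigenvalues i ≤ A.maxEigenvalue :=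
  le_csSup (finite_setOf_eigenvalue A).bddAbove (hA.eigenvalues_mem_setOf_eigenvalue i)

theorem exists_mulVec_eq_maxEigenvalue_smul [Nonempty n] :
    ∃ x : n → ℝ, x ≠ 0 ∧ A *ᵥ x = A.maxEigenvalue • x :=
  Set.Nonempty.csSup_mem ⟨_, hA.eigenvalues_mem_setOf_eigenvalue (Classical.arbitrary n)⟩
    (finite_setOf_eigenvalue A)

theorem posSemidef_smul_one_sub {c : ℝ} (hc : ∀ i, hA.eigenvalues i ≤ c) :
    (c • (1 : Matrix n n ℝ) - A).PosSemidef := by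
  set U := Unitary.conjStarAlgAut ℝ _ hA.eigenvectorUnitary
  have hc1 : c • (1 : Matrix n n ℝ) = U (diagonal fun _ => c) := by
    simp [U, ← smul_one_eq_diagonal]
  rw [hc1, hA.spectral_theorem, ← map_sub, Unitary.conjStarAlgAut_apply,
    Unitary.isUnit_coe.posSemidef_star_right_conjugate_iff, diagonal_sub, posSemidef_diagonal_iff]
  exact fun i => sub_nonneg.2 (hc i)

theorem dotProduct_mulVec_le_maxEigenvalue (x : n → ℝ) :
    x ⬝ᵥ (A *ᵥ x) ≤ A.maxEigenvalue * (x ⬝ᵥ x) := by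
  have := (hA.posSemidef_smul_one_sub hA.eigenvalues_le_maxEigenvalue).dotProduct_mulVec_nonneg x
  rw [star_trivial, dotProduct_smul_one_sub_mulVec] at this
  linarith

theorem mulVec_eq_maxEigenvalue_smul {x : n → ℝ}
    (hx : x ⬝ᵥ (A *ᵥ x) = A.maxEigenvalue * (x ⬝ᵥ x)) : A *ᵥ x = A.maxEigenvalue • x := by
  have := (hA.posSemidef_smul_one_sub hA.eigenvalues_le_maxEigenvalue).dotProduct_mulVec_zero_iff x
  rw [star_trivial, dotProduct_smul_one_sub_mulVec, hx, sub_self, sub_mulVec, smul_mulVec,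
    one_mulVec, sub_eq_zero] at this
  exact (this.1 rfl).symm

theorem exists_nonneg_mulVec_eq_maxEigenvalue_smul [Nonempty n] (hA0 : ∀ i j, 0 ≤ A i j) :
    ∃ y : n → ℝ, y ≠ 0 ∧ (∀ i, 0 ≤ y i) ∧ A *ᵥ y = A.maxEigenvalue • y := by
  obtain ⟨x, hx, hAx⟩ := hA.exists_mulVec_eq_maxEigenvalue_smul
  set y : n → ℝ := fun i => |x i|
  have hy : y ≠ 0 := fun h => hx (funext fun i => abs_eq_zero.1 (congrFun h i))
  have hle : ∀ i, A.maxEigenvalue * y i ≤ (A *ᵥ y) i := fun i =>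
    calc A.maxEigenvalue * y i ≤ |A.maxEigenvalue * x i| := by
          rw [abs_mul]; exact mul_le_mul_of_nonneg_right (le_abs_self _) (abs_nonneg _)
      _ = |(A *ᵥ x) i| := by rw [hAx]; rfl
      _ ≤ (A *ᵥ y) i := (Finset.abs_sum_le_sum_abs _ _).trans_eq <| by
          simp [y, abs_mul, abs_of_nonneg (hA0 _ _), mulVec, dotProduct]
  refine ⟨y, hy, fun i => abs_nonneg _, hA.mulVec_eq_maxEigenvalue_smul <|
    le_antisymm (hA.dotProduct_mulVec_le_maxEigenvalue y) ?_⟩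
  rw [dotProduct, dotProduct, Finset.mul_sum]
  exact Finset.sum_le_sum fun i _ => by nlinarith [hle i, abs_nonneg (x i)]

end IsHermitian

end Matrix

namespace SimpleGraph

variable {V : Type*} (G : SimpleGraph V)

theorem dist_eq_two_iff {a b : V} :
    G.dist a b = 2 ↔ a ≠ b ∧ ¬G.Adj a b ∧ ∃ m, G.Adj a m ∧ G.Adj m b := by
  rw [dist, ENat.toNat_eq_iff two_ne_zero, Nat.cast_ofNat, edist_eq_two_iff]
  simp [Set.Nonempty, mem_commonNeighbors, G.adj_comm b]

theorem gsq_adj {a b : V} :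
    (gsq G).Adj a b ↔ a ≠ b ∧ (G.Adj a b ∨ ∃ m, G.Adj a m ∧ G.Adj m b) := by
  rw [gsq, fromRel_adj, G.dist_comm (u := b), or_self, dist_eq_one_iff_adj, dist_eq_two_iff]
  tauto

theorem le_gsq : G ≤ gsq G := fun _ _ h => G.gsq_adj.2 ⟨h.ne, .inl h⟩

variable {G} in
theorem Hom.gsq_adj_map {W : Type*} {G' : SimpleGraph W} (f : G →g G')
    (hf : Function.Injective f) {a b : V} (h : (gsq G).Adj a b) : (gsq G').Adj (f a) (f b) := by
  obtain ⟨hne, h | ⟨m, ham, hmb⟩⟩ := G.gsq_adj.1 h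
  · exact G'.gsq_adj.2 ⟨hf.ne hne, .inl (f.map_adj h)⟩
  · exact G'.gsq_adj.2 ⟨hf.ne hne, .inr ⟨f m, f.map_adj ham, f.map_adj hmb⟩⟩

theorem gsq_adj_iff_of_adj_iff_of_ne {G G' : SimpleGraph V} {u : V}
    (hGG' : ∀ p q, p ≠ u → q ≠ u → (G.Adj p q ↔ G'.Adj p q))
    (hG : (G.neighborSet u).Subsingleton) (hG' : (G'.neighborSet u).Subsingleton)
    {p q : V} (hp : p ≠ u) (hq : q ≠ u) : (gsq G).Adj p q ↔ (gsq G').Adj p q := by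
  suffices key : ∀ G G' : SimpleGraph V, (∀ p q, p ≠ u → q ≠ u → (G.Adj p q ↔ G'.Adj p q)) →
      (G.neighborSet u).Subsingleton → (gsq G).Adj p q → (gsq G').Adj p q from
    ⟨key G G' hGG' hG, key G' G (fun p q hp hq => (hGG' p q hp hq).symm) hG'⟩
  intro G G' hGG' hG h
  obtain ⟨hne, h | ⟨m, hpm, hmq⟩⟩ := G.gsq_adj.1 h
  · exact G'.gsq_adj.2 ⟨hne, .inl ((hGG' p q hp hq).1 h)⟩
  · obtain rfl | hm := eq_or_ne m u
    · exact absurd (hG hpm.symm hmq) hne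
    · exact G'.gsq_adj.2 ⟨hne, .inr ⟨m, (hGG' p m hp hm).1 hpm, (hGG' m q hm hq).1 hmq⟩⟩

section Spectral

variable [Fintype V]

theorem specRad_eq_maxEigenvalue : specRad G = (G.adjMatrix ℝ).maxEigenvalue := rfl

theorem dotProduct_adjMatrix_mulVec_le_specRad (x : V → ℝ) :
    x ⬝ᵥ (G.adjMatrix ℝ *ᵥ x) ≤ specRad G * (x ⬝ᵥ x) := by
  rw [specRad_eq_maxEigenvalue]
  exact (G.isHermitian_adjMatrix ℝ).dotProduct_mulVec_le_maxEigenvalue x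

theorem pos_of_adjMatrix_mulVec_eq_smul (hG : G.Connected) {x : V → ℝ} (hx0 : ∀ i, 0 ≤ x i)
    (hx : x ≠ 0) {μ : ℝ} (hAx : G.adjMatrix ℝ *ᵥ x = μ • x) (i : V) : 0 < x i := by
  have hstep : ∀ a b, G.Adj a b → x a = 0 → x b = 0 := by
    intro a b hab ha
    have hsum : ∑ c ∈ G.neighborFinset a, x c = 0 := by
      rw [← adjMatrix_mulVec_apply, hAx, Pi.smul_apply, ha, smul_zero]
    exact (Finset.sum_eq_zero_iff_of_nonneg fun c _ => hx0 c).1 hsum b (by simpa using hab)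
  have hzero : ∀ a b, G.Reachable a b → x a = 0 → x b = 0 := by
    rintro a b ⟨p⟩
    induction p with
    | nil => exact id
    | cons hadj _ ih => exact ih ∘ hstep _ _ hadj
  refine (hx0 i).lt_of_ne fun hi => hx (funext fun j => ?_)
  exact hzero i j (hG.preconnected i j) hi.symm

theorem exists_pos_adjMatrix_mulVec_eq_specRad_smul (hG : G.Connected) :
    ∃ x : V → ℝ, (∀ i, 0 < x i) ∧ G.adjMatrix ℝ *ᵥ x = specRad G • x := by
  have := hG.nonempty
  rw [specRad_eq_maxEigenvalue]
  obtain ⟨x, hx, hx0, hAx⟩ :=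
    (G.isHermitian_adjMatrix ℝ).exists_nonneg_mulVec_eq_maxEigenvalue_smul fun i j => by
      rw [adjMatrix_apply]; split_ifs <;> norm_num
  exact ⟨x, G.pos_of_adjMatrix_mulVec_eq_smul hG hx0 hx hAx, hAx⟩

theorem adjMatrix_mulVec_apply_le_sum {x : V → ℝ} (hx : ∀ i, 0 ≤ x i) {v : V}
    {s : Finset V} (hs : ∀ y, G.Adj v y → y ∈ s) : (G.adjMatrix ℝ *ᵥ x) v ≤ ∑ y ∈ s, x y := by
  rw [adjMatrix_mulVec_apply]
  exact Finset.sum_le_sum_of_subset_of_nonneg (fun y hy => hs y (by simpa using hy))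
    fun y _ _ => hx y

theorem sum_le_adjMatrix_mulVec_apply {x : V → ℝ} (hx : ∀ i, 0 ≤ x i) {v : V}
    {s : Finset V} (hs : ∀ y ∈ s, G.Adj v y) : ∑ y ∈ s, x y ≤ (G.adjMatrix ℝ *ᵥ x) v := by
  rw [adjMatrix_mulVec_apply]
  exact Finset.sum_le_sum_of_subset_of_nonneg (fun y hy => by simpa using hs y hy)
    fun y _ _ => hx y

theorem specRad_lt_of_adj_iff_of_ne {G G' : SimpleGraph V} {u : V}
    (hGG' : ∀ p q, p ≠ u → q ≠ u → (G.Adj p q ↔ G'.Adj p q)) {x : V → ℝ} (hxu : 0 < x u)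
    (hx : G.adjMatrix ℝ *ᵥ x = specRad G • x)
    (hlt : (G.adjMatrix ℝ *ᵥ x) u < (G'.adjMatrix ℝ *ᵥ x) u) : specRad G < specRad G' := by
  have hquad := Matrix.dotProduct_mulVec_sub_dotProduct_mulVec (G'.isSymm_adjMatrix (α := ℝ))
    (G.isSymm_adjMatrix (α := ℝ)) (u := u)
    (fun p q hp hq => by simp [adjMatrix_apply, hGG' p q hp hq]) (by simp) x
  have hxx : 0 < x ⬝ᵥ x :=
    (mul_self_pos.2 hxu.ne').trans_le (Finset.single_le_sum (fun i _ => mul_self_nonneg (x i))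
      (Finset.mem_univ u))
  have hG : x ⬝ᵥ (G.adjMatrix ℝ *ᵥ x) = specRad G * (x ⬝ᵥ x) := by
    rw [hx, dotProduct_smul, smul_eq_mul]
  have hG' := G'.dotProduct_adjMatrix_mulVec_le_specRad x
  have hpos := mul_pos (mul_pos two_pos hxu) (sub_pos.2 hlt)
  exact lt_of_mul_lt_mul_right (by linarith) hxx.le

end Spectral

end SimpleGraph

section Coalescence

variable {V₁ V₂ : Type*} {T : SimpleGraph V₁} {v : V₁} {H : SimpleGraph V₂} {w : V₂}

@[simp] theorem coal_adj_inl_inl {a b : V₁} : (coal T v H w).Adj (inl a) (inl b) ↔ T.Adj a b := by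
  simp only [coal, fromRel_adj, ne_eq, inl.injEq]
  exact ⟨fun ⟨_, h⟩ => h.elim id (·.symm), fun h => ⟨h.ne, .inl h⟩⟩

@[simp] theorem coal_adj_inl_inr {a : V₁} {x : {x : V₂ // x ≠ w}} :
    (coal T v H w).Adj (inl a) (inr x) ↔ a = v ∧ H.Adj w x := by
  simp [coal]

@[simp] theorem coal_adj_inr_inl {a : V₁} {x : {x : V₂ // x ≠ w}} :
    (coal T v H w).Adj (inr x) (inl a) ↔ a = v ∧ H.Adj w x := by
  simp [coal]

@[simp] theorem coal_adj_inr_inr {x y : {x : V₂ // x ≠ w}} :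
    (coal T v H w).Adj (inr x) (inr y) ↔ H.Adj x y := by
  simp only [coal, fromRel_adj, ne_eq, inr.injEq]
  exact ⟨fun ⟨_, h⟩ => h.elim id (·.symm), fun h => ⟨fun hxy => h.ne (congrArg _ hxy), .inl h⟩⟩

theorem coal_adj_inl_of_ne {a : V₁} (ha : a ≠ v) {y : V₁ ⊕ {x : V₂ // x ≠ w}} :
    (coal T v H w).Adj (inl a) y ↔ ∃ b, y = inl b ∧ T.Adj a b := by
  rcases y with b | x <;> simp [ha]

def coalInl (T : SimpleGraph V₁) (v : V₁) (H : SimpleGraph V₂) (w : V₂) : T →g coal T v H w where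
  toFun := inl
  map_rel' := coal_adj_inl_inl.2

noncomputable def coalInr (T : SimpleGraph V₁) (v : V₁) (H : SimpleGraph V₂) (w : V₂) :
    H →g coal T v H w where
  toFun y := if hy : y = w then inl v else inr ⟨y, hy⟩
  map_rel' {y z} h := by
    by_cases hy : y = w <;> by_cases hz : z = w
    · exact absurd (hy.trans hz.symm) h.ne
    · subst hy; simpa [hz] using h
    · subst hz; simpa [hy] using h.symm
    · simpa [hy, hz] using h

theorem coal_connected (hT : T.Connected) (hH : H.Connected) : (coal T v H w).Connected := by
  refine (connected_iff_exists_forall_reachable _).2 ⟨inl v, ?_⟩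
  rintro (a | x)
  · exact (hT v a).map (coalInl T v H w)
  · have := (hH w x).map (coalInr T v H w)
    simpa [coalInr, x.2] using this

theorem coal_gsq_adj_inl_iff {a : V₁} (ha : a ≠ v) (hav : ¬T.Adj a v)
    {y : V₁ ⊕ {x : V₂ // x ≠ w}} :
    (gsq (coal T v H w)).Adj (inl a) y ↔ ∃ b, y = inl b ∧ (gsq T).Adj a b := by
  constructor
  · rw [gsq_adj]
    rintro ⟨hne, h | ⟨m, ham, hmy⟩⟩
    · obtain ⟨b, rfl, hab⟩ := (coal_adj_inl_of_ne ha).1 h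
      exact ⟨b, rfl, T.le_gsq hab⟩
    · obtain ⟨c, rfl, hac⟩ := (coal_adj_inl_of_ne ha).1 ham
      obtain ⟨b, rfl, hcb⟩ := (coal_adj_inl_of_ne fun hcv : c = v => hav (hcv ▸ hac)).1 hmy
      exact ⟨b, rfl, T.gsq_adj.2 ⟨fun hab => hne (congrArg inl hab), .inr ⟨c, hac, hcb⟩⟩⟩
  · rintro ⟨b, rfl, hab⟩
    exact (coalInl T v H w).gsq_adj_map inl_injective hab

end Coalescence

/-- The path `0 - 1 - 2 - 3` with the vertex `4` attached to `a`; the paper's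
`v₁, v₂, v₃, v₄, u` are `0, 1, 2, 3, 4`. -/
def pendantTree (a : Fin 5) : SimpleGraph (Fin 5) :=
  SimpleGraph.fromRel fun p q : Fin 5 =>
    (p, q) ∈ ({(0, 1), (1, 2), (2, 3), (4, a)} : Set (Fin 5 × Fin 5))

theorem pendantTree_adj {a p q : Fin 5} :
    (pendantTree a).Adj p q ↔ p ≠ q ∧
      ((p.val + 1 = q.val ∨ q.val + 1 = p.val) ∧ p ≠ 4 ∧ q ≠ 4 ∨
        p = 4 ∧ q = a ∨ p = a ∧ q = 4) := by
  simp only [pendantTree, fromRel_adj, Set.mem_insert_iff, Set.mem_singleton_iff, Prod.ext_iff]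
  revert a p q
  decide

theorem pendantTree_adj_iff_of_ne {a b p q : Fin 5} (hp : p ≠ 4) (hq : q ≠ 4) :
    (pendantTree a).Adj p q ↔ (pendantTree b).Adj p q := by
  simp only [pendantTree_adj]
  revert a b p q
  decide

theorem pendantTree_adj_four {a q : Fin 5} (ha : a ≠ 4) : (pendantTree a).Adj 4 q ↔ q = a := by
  rw [pendantTree_adj]
  revert a q
  decide

theorem pendantTree_zero_connected : (pendantTree 0).Connected := by
  have r1 := (pendantTree_adj.2 (by decide) : (pendantTree 0).Adj 0 1).reachable
  have r2 := r1.trans (pendantTree_adj.2 (by decide) : (pendantTree 0).Adj 1 2).reachable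
  have r3 := r2.trans (pendantTree_adj.2 (by decide) : (pendantTree 0).Adj 2 3).reachable
  have r4 := (pendantTree_adj.2 (by decide) : (pendantTree 0).Adj 0 4).reachable
  refine (connected_iff_exists_forall_reachable _).2 ⟨0, fun q => ?_⟩
  fin_cases q
  exacts [.rfl, r1, r2, r3, r4]

section PendantCoalescence

variable {V : Type*} (H : SimpleGraph V) (w : V)

theorem coal_pendantTree_adj_inl_four {a : Fin 5} (ha : a ≠ 4) {y : Fin 5 ⊕ {x : V // x ≠ w}} :
    (coal (pendantTree a) 3 H w).Adj (inl 4) y ↔ y = inl a := by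
  simp [coal_adj_inl_of_ne (show (4 : Fin 5) ≠ 3 by decide), pendantTree_adj_four ha]

theorem coal_pendantTree_adj_iff_of_ne {a b : Fin 5} {p q : Fin 5 ⊕ {x : V // x ≠ w}}
    (hp : p ≠ inl 4) (hq : q ≠ inl 4) :
    (coal (pendantTree a) 3 H w).Adj p q ↔ (coal (pendantTree b) 3 H w).Adj p q := by
  rcases p with p | p <;> rcases q with q | q <;> simp only [coal_adj_inl_inl, coal_adj_inl_inr,
    coal_adj_inr_inl, coal_adj_inr_inr]
  exact pendantTree_adj_iff_of_ne (fun h => hp (congrArg inl h)) (fun h => hq (congrArg inl h))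

theorem gsq_coal_pendantTree_adj_iff_of_ne {a b : Fin 5} (ha : a ≠ 4) (hb : b ≠ 4)
    {p q : Fin 5 ⊕ {x : V // x ≠ w}} (hp : p ≠ inl 4) (hq : q ≠ inl 4) :
    (gsq (coal (pendantTree a) 3 H w)).Adj p q ↔ (gsq (coal (pendantTree b) 3 H w)).Adj p q := by
  refine gsq_adj_iff_of_adj_iff_of_ne (fun p q hp hq => coal_pendantTree_adj_iff_of_ne H w hp hq)
    ?_ ?_ hp hq <;>
  · intro y hy z hz
    simp only [mem_neighborSet, coal_pendantTree_adj_inl_four H w ha,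
      coal_pendantTree_adj_inl_four H w hb] at hy hz
    rw [hy, hz]

end PendantCoalescence

section CoalescenceSquareRows

variable {V₁ V₂ : Type*} [Fintype V₁] [Fintype V₂] {T : SimpleGraph V₁} {v : V₁}
  {H : SimpleGraph V₂} {w : V₂} {x : V₁ ⊕ {x : V₂ // x ≠ w} → ℝ}

theorem gsq_coal_mulVec_inl_le_sum (hx : ∀ i, 0 ≤ x i) {a : V₁} (ha : a ≠ v) (hav : ¬T.Adj a v)
    {s : Finset V₁} (hs : ∀ b, (gsq T).Adj a b → b ∈ s) :
    ((gsq (coal T v H w)).adjMatrix ℝ *ᵥ x) (inl a) ≤ ∑ b ∈ s, x (inl b) := by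
  refine (adjMatrix_mulVec_apply_le_sum _ hx (s := s.map .inl) fun y hy => ?_).trans_eq
    (Finset.sum_map _ _ _)
  obtain ⟨b, rfl, hb⟩ := (coal_gsq_adj_inl_iff ha hav).1 hy
  exact Finset.mem_map_of_mem _ (hs b hb)

theorem sum_le_gsq_coal_mulVec_inl (hx : ∀ i, 0 ≤ x i) {a : V₁} {s : Finset V₁}
    (hs : ∀ b ∈ s, (gsq T).Adj a b) :
    ∑ b ∈ s, x (inl b) ≤ ((gsq (coal T v H w)).adjMatrix ℝ *ᵥ x) (inl a) := by
  refine (Finset.sum_map _ _ _).symm.trans_le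
    (sum_le_adjMatrix_mulVec_apply _ hx (s := s.map .inl) fun y hy => ?_)
  obtain ⟨b, hb, rfl⟩ := Finset.mem_map.1 hy
  exact (coalInl T v H w).gsq_adj_map inl_injective (hs b hb)

end CoalescenceSquareRows

theorem gsq_coal_pendantTree_zero_mulVec_inl_four_lt {V : Type*} [Fintype V]
    {H : SimpleGraph V} {w : V} {x : Fin 5 ⊕ {x : V // x ≠ w} → ℝ} (hx : ∀ i, 0 < x i)
    (hAx : (gsq (coal (pendantTree 0) 3 H w)).adjMatrix ℝ *ᵥ x =
      specRad (gsq (coal (pendantTree 0) 3 H w)) • x) :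
    ((gsq (coal (pendantTree 0) 3 H w)).adjMatrix ℝ *ᵥ x) (inl 4) <
      x (inl 1) + x (inl 2) + x (inl 3) := by
  set ρ := specRad (gsq (coal (pendantTree 0) 3 H w))
  have hx0 i : 0 ≤ x i := (hx i).le
  have row i : ((gsq (coal (pendantTree 0) 3 H w)).adjMatrix ℝ *ᵥ x) i = ρ * x i := by
    rw [hAx, Pi.smul_apply, smul_eq_mul]
  have h43 : ¬(pendantTree 0).Adj 4 3 := by rw [pendantTree_adj]; decide
  have h03 : ¬(pendantTree 0).Adj 0 3 := by rw [pendantTree_adj]; decide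
  have h4 : ((gsq (coal (pendantTree 0) 3 H w)).adjMatrix ℝ *ᵥ x) (inl 4) ≤
      x (inl 0) + x (inl 1) :=
    (gsq_coal_mulVec_inl_le_sum hx0 (s := {0, 1}) (by decide) h43
      (by simp only [gsq_adj, pendantTree_adj]; decide)).trans_eq (by simp)
  have h0 : ρ * x (inl 0) ≤ x (inl 1) + x (inl 2) + x (inl 4) := by
    rw [← row]
    exact (gsq_coal_mulVec_inl_le_sum hx0 (s := {1, 2, 4}) (by decide) h03
      (by simp only [gsq_adj, pendantTree_adj]; decide)).trans_eq (by simp [add_assoc])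
  have h2 : x (inl 0) + x (inl 1) + x (inl 3) ≤ ρ * x (inl 2) := by
    rw [← row]
    refine le_of_eq_of_le ?_ (sum_le_gsq_coal_mulVec_inl hx0 (s := {0, 1, 3})
      (by simp only [gsq_adj, pendantTree_adj]; decide))
    simp [add_assoc]
  have h3 : x (inl 1) + x (inl 2) ≤ ρ * x (inl 3) := by
    rw [← row]
    refine le_of_eq_of_le ?_ (sum_le_gsq_coal_mulVec_inl hx0 (s := {1, 2})
      (by simp only [gsq_adj, pendantTree_adj]; decide))
    simp
  suffices x (inl 0) ≤ x (inl 2) by linarith [hx (inl 3)]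
  rw [row] at h4
  have hρ : 1 < ρ := by
    by_contra! hρ
    have := mul_le_mul_of_nonneg_right hρ (hx0 (inl 2))
    have := mul_le_mul_of_nonneg_right hρ (hx0 (inl 3))
    linarith [hx (inl 0), hx (inl 1)]
  have hab : x (inl 3) - x (inl 4) ≤ (ρ + 1) * (x (inl 2) - x (inl 0)) := by linarith
  have hba : x (inl 2) - x (inl 0) ≤ ρ * (x (inl 3) - x (inl 4)) := by linarith
  have key : 0 ≤ (ρ * (ρ + 1) - 1) * (x (inl 2) - x (inl 0)) := by
    linarith [mul_le_mul_of_nonneg_left hab (by linarith : 0 ≤ ρ)]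
  have hpos : 0 < ρ * (ρ + 1) - 1 := by nlinarith
  linarith [(mul_nonneg_iff_of_pos_left hpos).1 key]

/-- For `T` the path `v₁v₂v₃v₄` with pendant edge `uv₃` (vertices
`v₁,v₂,v₃,v₄,u = 0,1,2,3,4`), coalescing `v₄` with a vertex `w` of a connected
graph `H`, relocating the pendant edge from `v₃` to `v₁` strictly decreases the
spectral radius of the square. -/
theorem specRad_sq_relocate_pendant_lt {V : Type*} [Fintype V]
    (H : SimpleGraph V) (hH : H.Connected) (w : V) :
    specRad (gsq (coal (SimpleGraph.fromRel fun a b : Fin 5 =>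
        (a, b) ∈ ({(0, 1), (1, 2), (2, 3), (4, 0)} : Set (Fin 5 × Fin 5))) 3 H w)) <
      specRad (gsq (coal (SimpleGraph.fromRel fun a b : Fin 5 =>
        (a, b) ∈ ({(0, 1), (1, 2), (2, 3), (4, 2)} : Set (Fin 5 × Fin 5))) 3 H w)) := by
  change specRad (gsq (coal (pendantTree 0) 3 H w)) < specRad (gsq (coal (pendantTree 2) 3 H w))
  obtain ⟨x, hx, hAx⟩ := exists_pos_adjMatrix_mulVec_eq_specRad_smul _
    ((coal_connected pendantTree_zero_connected hH).mono (le_gsq _))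
  refine specRad_lt_of_adj_iff_of_ne (u := inl 4) (fun p q hp hq =>
    gsq_coal_pendantTree_adj_iff_of_ne H w (by decide) (by decide) hp hq) (hx _) hAx ?_
  refine (gsq_coal_pendantTree_zero_mulVec_inl_four_lt hx hAx).trans_le ?_
  refine le_of_eq_of_le (by simp [add_assoc])
    (sum_le_gsq_coal_mulVec_inl (fun i => (hx i).le) (s := {1, 2, 3}) ?_)
  simp only [gsq_adj, pendantTree_adj]
  decide
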